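/- arXiv:1811.01694 — 7 statements merged into one kernel-verified Lean document; each statement's English description precedes it below -/
import Mathlib

section
/- Let J be a real 2n×2n matrix with JᵀΩ₀J = Ω₀, J² = −I, and such that Ω₀J is positive definite (i.e. J ∈ 𝒜𝒞⁺(2n)). Let S = (Ω₀J)^{1/2} be the positive definite symmetric square root of Ω₀J. Then S ∈ Sp(2n,ℝ) and S J S⁻¹ = −Ω₀. In particular, the conjugation action of Sp(2n,ℝ) on 𝒜𝒞⁺(2n) is transitive. -/
/-!
`A = Ω₀ J` is symmetric positive definite and symplectic (it is a product of the symplectic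
matrices `Ω₀` and `J`), so `A Ω₀ A = Ω₀`, i.e. `A⁻¹ = Ω₀ A Ω₀ᵀ`. Taking square roots, which
commute with inversion and with conjugation by the orthogonal matrix `Ω₀`, gives
`S⁻¹ = Ω₀ S Ω₀ᵀ`, i.e. `S Ω₀ S = Ω₀`: the square root `S` is symplectic. Since `J = -Ω₀ S²`,
this yields `S J = -Ω₀ S`.
-/

open Matrix
open scoped MatrixOrder

/-- The standard symplectic form matrix on `ℝ^{2n}`, in `n×n` blocks `[[0, 1],[-1, 0]]`. -/
noncomputable def Omega0 (n : ℕ) : Matrix (Fin n ⊕ Fin n) (Fin n ⊕ Fin n) ℝ :=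
  fromBlocks 0 1 (-1) 0

namespace CFC

variable {A : Type*} [PartialOrder A] [Ring A] [StarRing A] [TopologicalSpace A]
  [StarOrderedRing A] [Algebra ℝ A] [ContinuousFunctionalCalculus ℝ A IsSelfAdjoint]
  [NonnegSpectrumClass ℝ A] [IsSemitopologicalRing A] [T2Space A]

lemma sqrt_unitary_conjugate {u a : A} (hu : u ∈ unitary A) (ha : 0 ≤ a) :
    sqrt (u * a * star u) = u * sqrt a * star u := by
  refine sqrt_unique ?_ (star_right_conjugate_nonneg (sqrt_nonneg a) u)
  calc u * sqrt a * star u * (u * sqrt a * star u)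
      = u * sqrt a * (star u * u) * sqrt a * star u := by noncomm_ring
    _ = u * a * star u := by
      rw [Unitary.star_mul_self_of_mem hu, mul_one, mul_assoc u, sqrt_mul_sqrt_self a ha]

lemma sqrt_mul_mul_sqrt_eq_of_mul_mul_eq {u a : A} (hu : u ∈ unitary A) (ha : 0 ≤ a)
    (h : a * u * a = u) : sqrt a * u * sqrt a = u := by
  have h' : a * star u * a = star u := by
    simpa [mul_assoc, ha.isSelfAdjoint.star_eq] using congrArg star h
  let v : Aˣ := ⟨a, u * a * star u,
    by rw [← mul_assoc, ← mul_assoc, h, Unitary.mul_star_self_of_mem hu],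
    by rw [mul_assoc, mul_assoc, ← mul_assoc a, h', Unitary.mul_star_self_of_mem hu]⟩
  have hinv : Ring.inverse a = u * a * star u := Ring.inverse_unit v
  have hsqrt : sqrt a * (u * sqrt a * star u) = 1 := by
    rw [← sqrt_unitary_conjugate hu ha, ← hinv, sqrt_ringInverse]
    exact Ring.mul_inverse_cancel _ ((isUnit_sqrt_iff a ha).2 v.isUnit)
  calc sqrt a * u * sqrt a = sqrt a * u * sqrt a * (star u * u) := by
        rw [Unitary.star_mul_self_of_mem hu, mul_one]
    _ = sqrt a * (u * sqrt a * star u) * u := by noncomm_ring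
    _ = u := by rw [hsqrt, one_mul]

end CFC

lemma Omega0_transpose (n : ℕ) : (Omega0 n)ᵀ = -Omega0 n := by
  simp [Omega0, fromBlocks_transpose, fromBlocks_neg]

lemma Omega0_mul_self (n : ℕ) : Omega0 n * Omega0 n = -1 := by
  simp [Omega0, fromBlocks_multiply, ← fromBlocks_one, fromBlocks_neg]

lemma Omega0_mem_unitary (n : ℕ) :
    Omega0 n ∈ unitary (Matrix (Fin n ⊕ Fin n) (Fin n ⊕ Fin n) ℝ) := by
  rw [Unitary.mem_iff, star_eq_conjTranspose, conjTranspose_eq_transpose_of_trivial,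
    Omega0_transpose, neg_mul, mul_neg, Omega0_mul_self, neg_neg, and_self]

lemma Omega0_mul_symplectic {n : ℕ} {J : Matrix (Fin n ⊕ Fin n) (Fin n ⊕ Fin n) ℝ}
    (hJ : Jᵀ * Omega0 n * J = Omega0 n) :
    (Omega0 n * J)ᵀ * Omega0 n * (Omega0 n * J) = Omega0 n := by
  calc (Omega0 n * J)ᵀ * Omega0 n * (Omega0 n * J)
      = -(Jᵀ * (Omega0 n * (Omega0 n * Omega0 n)) * J) := by
        rw [transpose_mul, Omega0_transpose]; noncomm_ring
    _ = Omega0 n := by rw [Omega0_mul_self, mul_neg, mul_one, mul_neg, neg_mul, neg_neg, hJ]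

theorem stmt2_general (n : ℕ) (J : Matrix (Fin n ⊕ Fin n) (Fin n ⊕ Fin n) ℝ)
    (hJ : Jᵀ * Omega0 n * J = Omega0 n)
    (hpd : (Omega0 n * J).PosDef) :
    (CFC.sqrt (Omega0 n * J))ᵀ * Omega0 n * CFC.sqrt (Omega0 n * J) = Omega0 n ∧
    CFC.sqrt (Omega0 n * J) * J * (CFC.sqrt (Omega0 n * J))⁻¹ = -(Omega0 n) ∧
    ∃ P : Matrix (Fin n ⊕ Fin n) (Fin n ⊕ Fin n) ℝ,
      Pᵀ * Omega0 n * P = Omega0 n ∧ P * J * P⁻¹ = -(Omega0 n) := by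
  set Ω := Omega0 n
  set S := CFC.sqrt (Ω * J)
  have hA : (Ω * J) * Ω * (Ω * J) = Ω := by
    have h := Omega0_mul_symplectic hJ
    rwa [(isHermitian_iff_isSymm.1 hpd.isHermitian).eq] at h
  have hSΩS : S * Ω * S = Ω :=
    CFC.sqrt_mul_mul_sqrt_eq_of_mul_mul_eq (Omega0_mem_unitary n) hpd.posSemidef.nonneg hA
  have hS : Sᵀ = S :=
    (isHermitian_iff_isSymm.1 (CFC.sqrt_nonneg (Ω * J)).posSemidef.isHermitian).eq
  have hSS : S * S = Ω * J := CFC.sqrt_mul_sqrt_self _ hpd.posSemidef.nonneg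
  have hSinv : S * S⁻¹ = 1 :=
    mul_nonsing_inv S (isUnit_iff_isUnit_det S |>.1 (hpd.isStrictlyPositive.isUnit_cfcSqrt _))
  have hSJ : S * J = -(Ω * S) := by
    calc S * J = -(S * (Ω * (Ω * J))) := by rw [← mul_assoc Ω, Omega0_mul_self]; noncomm_ring
      _ = -(S * Ω * S * S) := by rw [← hSS]; noncomm_ring
      _ = -(Ω * S) := by rw [hSΩS]
  have hsymp : Sᵀ * Ω * S = Ω := by rw [hS, hSΩS]
  have hconj : S * J * S⁻¹ = -Ω := by
    rw [hSJ, neg_mul, mul_assoc, hSinv, mul_one]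
  exact ⟨hsymp, hconj, S, hsymp, hconj⟩

/-- Let `J ∈ 𝒜𝒞⁺(2n)`, i.e. `J` is a symplectic matrix with `J² = -1` and `Ω₀ J` positive
definite.  Then the positive definite symmetric square root `S = (Ω₀ J)^{1/2}` is symplectic
and conjugates `J` to the standard complex structure `-Ω₀`; in particular the conjugation
action of `Sp(2n, ℝ)` on `𝒜𝒞⁺(2n)` is transitive. -/
theorem stmt2 (n : ℕ) (J : Matrix (Fin n ⊕ Fin n) (Fin n ⊕ Fin n) ℝ)
    (hJ : Jᵀ * Omega0 n * J = Omega0 n) (hJ2 : J * J = -1)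
    (hpd : (Omega0 n * J).PosDef) :
    (CFC.sqrt (Omega0 n * J))ᵀ * Omega0 n * CFC.sqrt (Omega0 n * J) = Omega0 n ∧
    CFC.sqrt (Omega0 n * J) * J * (CFC.sqrt (Omega0 n * J))⁻¹ = -(Omega0 n) ∧
    ∃ P : Matrix (Fin n ⊕ Fin n) (Fin n ⊕ Fin n) ℝ,
      Pᵀ * Omega0 n * P = Omega0 n ∧ P * J * P⁻¹ = -(Omega0 n) :=
  stmt2_general n J hJ hpd
end

section
/- Let P ∈ Sp(2n,ℝ) be written in n×n blocks as P = [[A,B],[C,D]], and let Z be a symmetric n×n complex matrix whose imaginary part is positive definite. Then the complex matrix CZ + D is invertible, and the matrix P.Z := (AZ+B)(CZ+D)⁻¹ is again symmetric with positive definite imaginary part. Thus the Möbius transformations give a well-defined action of Sp(2n,ℝ) on Siegel's upper half space 𝔥(n). -/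
/-!
Write `M = CZ + D` and `N = AZ + B`. The block relations of `Pᵀ Ω₀ P = Ω₀` make
`(Z₁Aᵀ + Bᵀ)(CZ₂ + D) - (Z₁Cᵀ + Dᵀ)(AZ₂ + B) = Z₁ - Z₂` for all `Z₁, Z₂`. Taking `Z₁ = Z₂ = Z`
gives `NᵀM = MᵀN`, so `W = NM⁻¹` is symmetric; taking `Z₁ = Zᴴ, Z₂ = Z` gives
`ℑ (MᴴN) = ℑ Z`. Since `ℑ Z` is positive definite and `v* ℑ (MᴴN) v = Im ((Mv)* Nv)`, `Mv = 0`
forces `v = 0`. Finally `Mᴴ (ℑ W) M = ℑ (MᴴN) = ℑ Z` shows that `ℑ W` is positive definite.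
-/

open Matrix

open scoped ComplexStarModule ComplexOrder

theorem imaginaryPart_star_mul_mul {A : Type*} [Ring A] [StarRing A] [Algebra ℂ A]
    [StarModule ℂ A] (m a : A) : (ℑ (star m * a * m) : A) = star m * ℑ a * m := by
  simp [imaginaryPart_apply_coe, star_mul, mul_sub, sub_mul, mul_assoc]

theorem imaginaryPart_eq_of_sub_star_eq {A : Type*} [AddCommGroup A] [Module ℂ A]
    [StarAddMonoid A] [StarModule ℂ A] {a b : A} (h : a - star a = b - star b) : ℑ a = ℑ b := by
  ext1; simp [imaginaryPart_apply_coe, h]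

variable {ι : Type*}

section Symplectic

variable [Fintype ι] [DecidableEq ι] {R : Type*} [CommRing R]

/-- The condition `Pᵀ * Omega0 n * P = Omega0 n` over any ring and index type. Mathlib's
`symplecticGroup` uses `J = -Omega0` and the condition `P J Pᵀ = J` instead. -/
def Matrix.IsSymplectic (P : Matrix (ι ⊕ ι) (ι ⊕ ι) R) : Prop :=
  Pᵀ * fromBlocks 0 1 (-1) 0 * P = fromBlocks 0 1 (-1) 0

variable {A B C D : Matrix ι ι R}

theorem Matrix.IsSymplectic.map {S : Type*} [CommRing S] (hP : (fromBlocks A B C D).IsSymplectic)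
    (f : R →+* S) : (fromBlocks (A.map f) (B.map f) (C.map f) (D.map f)).IsSymplectic := by
  have := congrArg (·.map f) hP
  simpa [IsSymplectic, Matrix.map_mul, transpose_map, fromBlocks_map, Matrix.map_neg,
    Matrix.map_one] using this

theorem Matrix.IsSymplectic.moebius_identity (hP : (fromBlocks A B C D).IsSymplectic)
    (Z₁ Z₂ : Matrix ι ι R) :
    (Z₁ * Aᵀ + Bᵀ) * (C * Z₂ + D) - (Z₁ * Cᵀ + Dᵀ) * (A * Z₂ + B) = Z₁ - Z₂ := by
  rw [IsSymplectic, fromBlocks_transpose, fromBlocks_multiply, fromBlocks_multiply,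
    fromBlocks_inj] at hP
  obtain ⟨h₁₁, h₁₂, h₂₁, h₂₂⟩ := hP
  linear_combination (norm := noncomm_ring) Z₁ * h₁₁ * Z₂ + Z₁ * h₁₂ + h₂₁ * Z₂ + h₂₂

theorem Matrix.IsSymplectic.transpose_moebius_comm (hP : (fromBlocks A B C D).IsSymplectic)
    {Z : Matrix ι ι R} (hZ : Z.IsSymm) :
    (A * Z + B)ᵀ * (C * Z + D) = (C * Z + D)ᵀ * (A * Z + B) := by
  rw [transpose_add, transpose_add, transpose_mul, transpose_mul, hZ.eq, ← sub_eq_zero]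
  exact (hP.moebius_identity Z Z).trans (sub_self Z)

theorem Matrix.isSymm_mul_nonsing_inv_of_transpose_mul_comm {M N : Matrix ι ι R} (hM : IsUnit M)
    (h : Nᵀ * M = Mᵀ * N) : (N * M⁻¹).IsSymm := by
  have hdet : IsUnit M.det := (isUnit_iff_isUnit_det M).1 hM
  have hdetT : IsUnit Mᵀ.det := by rwa [det_transpose]
  rw [IsSymm, transpose_mul, transpose_nonsing_inv]
  calc Mᵀ⁻¹ * Nᵀ = Mᵀ⁻¹ * (Nᵀ * M) * M⁻¹ := by
        rw [mul_assoc, mul_assoc, mul_nonsing_inv _ hdet, mul_one]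
    _ = N * M⁻¹ := by rw [h, ← mul_assoc, nonsing_inv_mul _ hdetT, one_mul]

end Symplectic

section Complex

theorem Matrix.conjTranspose_map_ofReal (A : Matrix ι ι ℝ) :
    (A.map Complex.ofReal)ᴴ = (A.map Complex.ofReal)ᵀ := by
  ext; simp

theorem Matrix.IsSymm.coe_imaginaryPart {Z : Matrix ι ι ℂ} (hZ : Z.IsSymm) :
    (ℑ Z : Matrix ι ι ℂ) = (Z.map Complex.im).map Complex.ofReal := by
  ext i j
  apply Complex.ext <;> simp [imaginaryPart_apply_coe, hZ.apply i j]
  ring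

variable [Fintype ι]

theorem Matrix.star_dotProduct_map_ofReal_mulVec {Y : Matrix ι ι ℝ} (hY : Y.IsSymm) (x : ι → ℂ) :
    star x ⬝ᵥ Y.map Complex.ofReal *ᵥ x =
      (((Complex.re ∘ x) ⬝ᵥ Y *ᵥ (Complex.re ∘ x) +
        (Complex.im ∘ x) ⬝ᵥ Y *ᵥ (Complex.im ∘ x) : ℝ) : ℂ) := by
  apply Complex.ext
  · simp [dotProduct, mulVec, Complex.re_sum, Finset.mul_sum, ← Finset.sum_add_distrib]
  · simp [dotProduct, mulVec, Complex.im_sum, Finset.mul_sum, ← sub_eq_add_neg, sub_eq_zero]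
    rw [Finset.sum_comm]
    exact Finset.sum_congr rfl fun i _ => Finset.sum_congr rfl fun j _ => by
      rw [← hY.apply i j]; ring

theorem Matrix.posDef_map_ofReal_iff {Y : Matrix ι ι ℝ} :
    (Y.map Complex.ofReal).PosDef ↔ Y.PosDef := by
  have hHerm : (Y.map Complex.ofReal).IsHermitian ↔ Y.IsHermitian := by
    rw [IsHermitian, conjTranspose_map_ofReal, ← transpose_map,
      (Matrix.map_injective Complex.ofReal_injective).eq_iff, isHermitian_iff_isSymm, IsSymm]
  rw [posDef_iff_dotProduct_mulVec, posDef_iff_dotProduct_mulVec, hHerm]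
  refine and_congr_right fun hY => ?_
  have hquad := star_dotProduct_map_ofReal_mulVec (isHermitian_iff_isSymm.1 hY)
  constructor
  · intro h x hx
    have hx' : Complex.ofReal ∘ x ≠ 0 := fun h0 =>
      hx (funext fun i => by simpa using congrFun h0 i)
    simpa [hquad, Function.comp_def] using h hx'
  · intro h x hx
    have hnonneg (v : ι → ℝ) : 0 ≤ v ⬝ᵥ Y *ᵥ v := by
      rcases eq_or_ne v 0 with rfl | hv
      · simp
      · simpa using (h hv).le
    rw [hquad, Complex.zero_lt_real]
    by_cases hre : Complex.re ∘ x = 0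
    · have him : Complex.im ∘ x ≠ 0 := fun him =>
        hx (funext fun i => Complex.ext (congrFun hre i) (congrFun him i))
      exact add_pos_of_nonneg_of_pos (hnonneg _) (by simpa using h him)
    · exact add_pos_of_pos_of_nonneg (by simpa using h hre) (hnonneg _)

theorem Matrix.isUnit_of_posDef_imaginaryPart_conjTranspose_mul [DecidableEq ι] {M N : Matrix ι ι ℂ}
    (h : (ℑ (Mᴴ * N) : Matrix ι ι ℂ).PosDef) : IsUnit M := by
  rw [isUnit_iff_isUnit_det, isUnit_iff_ne_zero, ne_eq, ← exists_mulVec_eq_zero_iff]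
  rintro ⟨v, hv, hMv⟩
  have hform (K L : Matrix ι ι ℂ) : star v ⬝ᵥ (Kᴴ * L) *ᵥ v = star (K *ᵥ v) ⬝ᵥ L *ᵥ v := by
    rw [← mulVec_mulVec, dotProduct_mulVec, star_mulVec]
  have := h.dotProduct_mulVec_pos hv
  rw [imaginaryPart_apply_coe, star_eq_conjTranspose, conjTranspose_mul,
    conjTranspose_conjTranspose, smul_mulVec, smul_mulVec, sub_mulVec, dotProduct_smul,
    dotProduct_smul, dotProduct_sub, hform, hform, hMv] at this
  simp at this

theorem Matrix.IsSymplectic.imaginaryPart_conjTranspose_moebius [DecidableEq ι]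
    {A B C D : Matrix ι ι ℝ} (hP : (fromBlocks A B C D).IsSymplectic) (Z : Matrix ι ι ℂ) :
    ℑ ((C.map Complex.ofReal * Z + D.map Complex.ofReal)ᴴ *
      (A.map Complex.ofReal * Z + B.map Complex.ofReal)) = ℑ Z := by
  apply imaginaryPart_eq_of_sub_star_eq
  have := (hP.map Complex.ofRealHom).moebius_identity Zᴴ Z
  rw [star_eq_conjTranspose, star_eq_conjTranspose, conjTranspose_mul,
    conjTranspose_conjTranspose, ← neg_sub Zᴴ Z, ← this, neg_sub]
  simp only [conjTranspose_add, conjTranspose_mul, conjTranspose_map_ofReal]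
  rfl

end Complex

/-- If `P = [[A,B],[C,D]]` is symplectic and `Z` is a symmetric complex `n×n` matrix with
positive definite imaginary part (a point of Siegel's upper half space), then `CZ + D` is
invertible and the Möbius image `(AZ+B)(CZ+D)⁻¹` is again symmetric with positive definite
imaginary part.  Hence `Sp(2n,ℝ)` acts on Siegel's upper half space. -/
theorem stmt3 (n : ℕ) (A B C D : Matrix (Fin n) (Fin n) ℝ)
    (hP : (fromBlocks A B C D)ᵀ * Omega0 n * fromBlocks A B C D = Omega0 n)
    (Z : Matrix (Fin n) (Fin n) ℂ) (hZsymm : Z.IsSymm)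
    (hZim : (Z.map Complex.im).PosDef) :
    IsUnit (C.map Complex.ofReal * Z + D.map Complex.ofReal) ∧
    ((A.map Complex.ofReal * Z + B.map Complex.ofReal) *
        (C.map Complex.ofReal * Z + D.map Complex.ofReal)⁻¹).IsSymm ∧
    (((A.map Complex.ofReal * Z + B.map Complex.ofReal) *
        (C.map Complex.ofReal * Z + D.map Complex.ofReal)⁻¹).map Complex.im).PosDef := by
  have hP : (fromBlocks A B C D).IsSymplectic := hP
  have hImMN := hP.imaginaryPart_conjTranspose_moebius Z
  set M := C.map Complex.ofReal * Z + D.map Complex.ofReal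
  set N := A.map Complex.ofReal * Z + B.map Complex.ofReal
  have hImZ : (ℑ Z : Matrix (Fin n) (Fin n) ℂ).PosDef := by
    rwa [hZsymm.coe_imaginaryPart, posDef_map_ofReal_iff]
  have hM : IsUnit M := isUnit_of_posDef_imaginaryPart_conjTranspose_mul (hImMN ▸ hImZ)
  have hW : (N * M⁻¹).IsSymm := isSymm_mul_nonsing_inv_of_transpose_mul_comm hM
    ((hP.map Complex.ofRealHom).transpose_moebius_comm hZsymm)
  refine ⟨hM, hW, ?_⟩
  have hN : N = N * M⁻¹ * M := by
    rw [mul_assoc, nonsing_inv_mul _ ((isUnit_iff_isUnit_det M).1 hM), mul_one]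
  rw [← posDef_map_ofReal_iff, ← hW.coe_imaginaryPart, ← hM.posDef_star_left_conjugate_iff,
    ← imaginaryPart_star_mul_mul, mul_assoc (star M), ← hN, star_eq_conjTranspose, hImMN]
  exact hImZ
end

section
/- The Möbius action of Sp(2n,ℝ) on Siegel's upper half space 𝔥(n) is transitive: for every symmetric n×n complex matrix Z with positive definite imaginary part there exists P = [[A,B],[C,D]] ∈ Sp(2n,ℝ) such that C(i·I_n)+D is invertible and (A(i·I_n)+B)(C(i·I_n)+D)⁻¹ = Z. -/
open Matrix

open Complex
open scoped MatrixOrder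

/-!
Write `Z = X + iY` with `X = Re Z` symmetric and `Y = Im Z` positive definite, and let `S = √Y`,
which is symmetric and invertible. The matrix `[[S, X S⁻¹], [0, S⁻¹]]`, the product of the
translation `[[1, X], [0, 1]]` and the dilation `[[S, 0], [0, S⁻¹]]`, is symplectic because
`S` and `X` are symmetric, and it sends `i·1` to `(iS + X S⁻¹) S = X + iS² = Z`.
-/

namespace Matrix

lemma PosDef.exists_isSymm_isUnit_mul_self_eq {m : Type*} [Fintype m] [DecidableEq m]
    {Y : Matrix m m ℝ} (hY : Y.PosDef) : ∃ S : Matrix m m ℝ, S.IsSymm ∧ IsUnit S ∧ S * S = Y :=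
  ⟨CFC.sqrt Y, isHermitian_iff_isSymm.mp (CFC.sqrt_nonneg Y).posSemidef.isHermitian,
    (CFC.isUnit_sqrt_iff Y).mpr hY.isUnit, CFC.sqrt_mul_sqrt_self Y⟩

lemma map_re_add_I_smul_map_im {m n : Type*} (Z : Matrix m n ℂ) :
    (Z.map re).map ofReal + I • (Z.map im).map ofReal = Z := by
  ext i j
  simp [Complex.ext_iff]

lemma map_ofReal_mul {l m n : Type*} [Fintype m] (M : Matrix l m ℝ) (N : Matrix m n ℝ) :
    (M * N).map ofReal = M.map ofReal * N.map ofReal :=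
  Matrix.map_mul (f := ofRealHom)

variable {m : Type*} [Fintype m] [DecidableEq m]

lemma map_ofReal_mul_map_ofReal_nonsing_inv {S : Matrix m m ℝ} (hS : IsUnit S) :
    S.map ofReal * S⁻¹.map ofReal = 1 := by
  rw [← map_ofReal_mul, mul_nonsing_inv S ((isUnit_iff_isUnit_det S).mp hS)]
  exact Matrix.map_one _ ofReal_zero ofReal_one

lemma map_ofReal_nonsing_inv_mul_map_ofReal {S : Matrix m m ℝ} (hS : IsUnit S) :
    S⁻¹.map ofReal * S.map ofReal = 1 := by
  rw [← map_ofReal_mul, nonsing_inv_mul S ((isUnit_iff_isUnit_det S).mp hS)]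
  exact Matrix.map_one _ ofReal_zero ofReal_one

lemma I_smul_add_mul_map_ofReal_nonsing_inv_mul_inv {S X : Matrix m m ℝ} (hS : IsUnit S) :
    (S.map ofReal * (I • 1) + (X * S⁻¹).map ofReal) * (S⁻¹.map ofReal)⁻¹ =
      X.map ofReal + I • (S * S).map ofReal := by
  rw [inv_eq_left_inv (map_ofReal_mul_map_ofReal_nonsing_inv hS), add_mul, map_ofReal_mul,
    mul_assoc (X.map ofReal), map_ofReal_nonsing_inv_mul_map_ofReal hS, mul_one, mul_smul_one,
    smul_mul_assoc, ← map_ofReal_mul, add_comm]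

end Matrix

lemma fromBlocks_transpose_mul_Omega0_mul_of_lowerLeft_zero {n : ℕ}
    {A B D : Matrix (Fin n) (Fin n) ℝ} (hAD : Aᵀ * D = 1) (hBD : Bᵀ * D = Dᵀ * B) :
    (fromBlocks A B 0 D)ᵀ * Omega0 n * fromBlocks A B 0 D = Omega0 n := by
  have hDA : Dᵀ * A = 1 := by rw [← transpose_transpose A, ← transpose_mul, hAD, transpose_one]
  simp [Omega0, fromBlocks_transpose, fromBlocks_multiply, hAD, hDA, hBD]

/-- The Möbius action of `Sp(2n,ℝ)` on Siegel's upper half space is transitive: every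
symmetric complex matrix `Z` with positive definite imaginary part is the image of the
base point `i·1` under some symplectic matrix `[[A,B],[C,D]]`. -/
theorem stmt4 (n : ℕ) (Z : Matrix (Fin n) (Fin n) ℂ) (hZsymm : Z.IsSymm)
    (hZim : (Z.map Complex.im).PosDef) :
    ∃ A B C D : Matrix (Fin n) (Fin n) ℝ,
      (fromBlocks A B C D)ᵀ * Omega0 n * fromBlocks A B C D = Omega0 n ∧
      IsUnit (C.map Complex.ofReal * (Complex.I • (1 : Matrix (Fin n) (Fin n) ℂ)) +
        D.map Complex.ofReal) ∧
      (A.map Complex.ofReal * (Complex.I • (1 : Matrix (Fin n) (Fin n) ℂ)) +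
          B.map Complex.ofReal) *
        (C.map Complex.ofReal * (Complex.I • (1 : Matrix (Fin n) (Fin n) ℂ)) +
          D.map Complex.ofReal)⁻¹ = Z := by
  obtain ⟨S, hS, hSu, hSS⟩ := hZim.exists_isSymm_isUnit_mul_self_eq
  have hX : (Z.map re).IsSymm := hZsymm.map re
  refine ⟨S, Z.map re * S⁻¹, 0, S⁻¹, ?_, ?_, ?_⟩
  · refine fromBlocks_transpose_mul_Omega0_mul_of_lowerLeft_zero ?_ ?_
    · rw [hS.eq, mul_nonsing_inv S ((isUnit_iff_isUnit_det S).mp hSu)]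
    · rw [transpose_mul, hX.eq, hS.inv.eq, mul_assoc]
  · rw [Matrix.map_zero _ ofReal_zero, zero_mul, zero_add]
    exact (isUnit_nonsing_inv_iff.mpr hSu).map ofRealHom.mapMatrix
  · rw [Matrix.map_zero _ ofReal_zero, zero_mul, zero_add,
      I_smul_add_mul_map_ofReal_nonsing_inv_mul_inv hSu, hSS, map_re_add_I_smul_map_im]
end

section
/- Let (V, ⟨·,·⟩) be a finite-dimensional real inner product space, let I : V → V be a linear map with I∘I = −id and ⟨Iv, Iw⟩ = ⟨v,w⟩ for all v,w, and let ω_c : V × V → ℂ be an ℝ-bilinear alternating form of type (2,0) with respect to I, i.e. ω_c(Iv, w) = i·ω_c(v,w) and ω_c(v, Iw) = i·ω_c(v,w) for all v,w. Let J : V → V be the linear map determined by ⟨Jv, w⟩ = Re(ω_c(v,w)) for all v,w, and assume J∘J = −id. Then: (1) ⟨Jv, Jw⟩ = ⟨v,w⟩ for all v,w; (2) I∘J + J∘I = 0; (3) ⟨(I∘J)v, w⟩ = Im(ω_c(v,w)) for all v,w; (4) ⟨Iv, Jv⟩ = 0 for all v. -/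
/-!
Since `J` is the Riesz representative of the skew form `Re ω_c`, it is skew-adjoint, and a
skew-adjoint `J` with `J² = -1` is orthogonal. The isometric complex structure `I` is skew-adjoint
as well, so the `(2,0)` conditions, through `Re (i z) = -Im z`, give
`⟨(IJ)v, w⟩ = -Re ω_c(v, Iw) = Im ω_c(v,w)` and `⟨(JI)v, w⟩ = Re ω_c(Iv, w) = -Im ω_c(v,w)`.
Adding these yields `IJ + JI = 0`, and `Iv ⊥ Jv` because `ω_c(v,v) = 0`.
-/

open scoped RealInnerProductSpace

section InnerProductSpace

variable {V : Type*} [NormedAddCommGroup V] [InnerProductSpace ℝ V]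

theorem inner_apply_left_eq_neg_of_sq_neg_of_isometry {I : V →ₗ[ℝ] V}
    (hI2 : ∀ v, I (I v) = -v) (hIiso : ∀ v w, ⟪I v, I w⟫ = ⟪v, w⟫) (v w : V) :
    ⟪I v, w⟫ = -⟪v, I w⟫ := by
  rw [← hIiso v (I w), hI2, inner_neg_right, neg_neg]

theorem inner_apply_apply_of_skew_of_sq_neg {J : V →ₗ[ℝ] V}
    (hJskew : ∀ v w, ⟪J v, w⟫ = -⟪J w, v⟫) (hJ2 : ∀ v, J (J v) = -v) (v w : V) :
    ⟪J v, J w⟫ = ⟪v, w⟫ := by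
  rw [hJskew, hJ2, inner_neg_left, neg_neg, real_inner_comm]

end InnerProductSpace

section RieszRepresentative

variable {V : Type*} [NormedAddCommGroup V] [InnerProductSpace ℝ V]
  {J : V →ₗ[ℝ] V} {ωc : V →ₗ[ℝ] V →ₗ[ℝ] ℂ}

theorem inner_apply_left_eq_neg_of_re_alternating (hJdef : ∀ v w, ⟪J v, w⟫ = (ωc v w).re)
    (halt : ∀ v w, ωc v w = -ωc w v) (v w : V) :
    ⟪J v, w⟫ = -⟪J w, v⟫ := by
  rw [hJdef, hJdef, halt, Complex.neg_re]

theorem inner_apply_comp_left_eq_neg_im {I : V →ₗ[ℝ] V}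
    (hJdef : ∀ v w, ⟪J v, w⟫ = (ωc v w).re)
    (h20l : ∀ v w, ωc (I v) w = Complex.I * ωc v w) (v w : V) :
    ⟪J (I v), w⟫ = -(ωc v w).im := by
  rw [hJdef, h20l, Complex.I_mul_re]

theorem inner_comp_apply_left_eq_im {I : V →ₗ[ℝ] V}
    (hIskew : ∀ v w, ⟪I v, w⟫ = -⟪v, I w⟫) (hJdef : ∀ v w, ⟪J v, w⟫ = (ωc v w).re)
    (h20r : ∀ v w, ωc v (I w) = Complex.I * ωc v w) (v w : V) :
    ⟪I (J v), w⟫ = (ωc v w).im := by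
  rw [hIskew, hJdef, h20r, Complex.I_mul_re, neg_neg]

end RieszRepresentative

theorem stmt8_general {V : Type*} [NormedAddCommGroup V] [InnerProductSpace ℝ V]
    (I J : V →ₗ[ℝ] V) (ωc : V →ₗ[ℝ] V →ₗ[ℝ] ℂ)
    (hI2 : ∀ v, I (I v) = -v)
    (hIiso : ∀ v w, ⟪I v, I w⟫ = ⟪v, w⟫)
    (halt : ∀ v w, ωc v w = -ωc w v)
    (h20l : ∀ v w, ωc (I v) w = Complex.I * ωc v w)
    (h20r : ∀ v w, ωc v (I w) = Complex.I * ωc v w)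
    (hJdef : ∀ v w, ⟪J v, w⟫ = (ωc v w).re)
    (hJ2 : ∀ v, J (J v) = -v) :
    (∀ v w, ⟪J v, J w⟫ = ⟪v, w⟫) ∧
    (∀ v, I (J v) + J (I v) = 0) ∧
    (∀ v w, ⟪I (J v), w⟫ = (ωc v w).im) ∧
    (∀ v, ⟪I v, J v⟫ = 0) := by
  have hIskew := inner_apply_left_eq_neg_of_sq_neg_of_isometry hI2 hIiso
  have hIJ := inner_comp_apply_left_eq_im hIskew hJdef h20r
  refine ⟨inner_apply_apply_of_skew_of_sq_neg
    (inner_apply_left_eq_neg_of_re_alternating hJdef halt) hJ2, fun v => ?_, hIJ, fun v => ?_⟩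
  · refine ext_inner_right ℝ fun w => ?_
    rw [inner_add_left, hIJ, inner_apply_comp_left_eq_neg_im hJdef h20l, inner_zero_left,
      add_neg_cancel]
  · have hvv : ωc v v = 0 := self_eq_neg.mp (halt v v)
    rw [hIskew, real_inner_comm, hIJ, hvv, Complex.zero_im, neg_zero]

/-- Algebraic criterion for hyperkähler structures: if `I` is an isometric complex structure
on a real inner product space `V`, `ω_c` is an alternating ℝ-bilinear ℂ-valued form of type
`(2,0)` with respect to `I`, and the endomorphism `J` defined by `⟨Jv, w⟩ = Re ω_c(v,w)`
satisfies `J² = -id`, then `J` is isometric, anticommutes with `I`, the form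
`⟨(IJ)v, w⟩` equals `Im ω_c(v,w)`, and `Iv ⊥ Jv` for all `v`. -/
theorem stmt8 {V : Type*} [NormedAddCommGroup V] [InnerProductSpace ℝ V]
    [FiniteDimensional ℝ V]
    (I J : V →ₗ[ℝ] V) (ωc : V →ₗ[ℝ] V →ₗ[ℝ] ℂ)
    (hI2 : ∀ v, I (I v) = -v)
    (hIiso : ∀ v w, ⟪I v, I w⟫ = ⟪v, w⟫)
    (halt : ∀ v w, ωc v w = -ωc w v)
    (h20l : ∀ v w, ωc (I v) w = Complex.I * ωc v w)
    (h20r : ∀ v w, ωc v (I w) = Complex.I * ωc v w)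
    (hJdef : ∀ v w, ⟪J v, w⟫ = (ωc v w).re)
    (hJ2 : ∀ v, J (J v) = -v) :
    (∀ v w, ⟪J v, J w⟫ = ⟪v, w⟫) ∧
    (∀ v, I (J v) + J (I v) = 0) ∧
    (∀ v w, ⟪I (J v), w⟫ = (ωc v w).im) ∧
    (∀ v, ⟪I v, J v⟫ = 0) :=
  stmt8_general I J ωc hI2 hIiso halt h20l h20r hJdef hJ2
end

section
/- Let J and A be real 2n×2n matrices such that J² = −I, det(J) = 1, and AJ + JA = 0. Then the adjugate matrix adj(A) also anticommutes with J: adj(A)·J + J·adj(A) = 0. -/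
/-!
Anticommuting with `J` means `J A = (-A) J`. The adjugate intertwines along with `A`
whenever the intertwiner `J` is invertible, and in even dimension `adj (-A) = -adj A`,
so `J adj A = -(adj A) J`.
-/

open Matrix

namespace Matrix

variable {ι R : Type*} [Fintype ι] [DecidableEq ι] [CommRing R]

theorem adjugate_neg_of_even_card (h : Even (Fintype.card ι)) (A : Matrix ι ι R) :
    adjugate (-A) = -adjugate A := by
  rcases isEmpty_or_nonempty ι with hι | hι
  · exact Subsingleton.elim _ _
  · have hodd : Odd (Fintype.card ι - 1) := Nat.Even.sub_odd Fintype.card_pos h odd_one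
    rw [← neg_one_smul R A, adjugate_smul, hodd.neg_one_pow, neg_one_smul]

theorem mul_adjugate_eq_adjugate_mul_of_mul_eq_mul {P A B : Matrix ι ι R} (hP : IsUnit P.det)
    (h : P * A = B * P) : P * adjugate A = adjugate B * P := by
  have hadj : adjugate A * adjugate P = adjugate P * adjugate B := by
    rw [← adjugate_mul_distrib, h, adjugate_mul_distrib]
  -- sandwich `hadj` between two copies of `P` and cancel `det P`
  have hscaled : P.det • (P * adjugate A) = P.det • (adjugate B * P) := by
    calc P.det • (P * adjugate A) = P * adjugate A * (adjugate P * P) := by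
          rw [adjugate_mul, Matrix.mul_smul, Matrix.mul_one]
      _ = P * (adjugate P * adjugate B) * P := by
          rw [← hadj]; simp only [Matrix.mul_assoc]
      _ = P.det • (adjugate B * P) := by
          rw [← Matrix.mul_assoc, mul_adjugate, smul_mul, Matrix.one_mul, smul_mul]
  exact hP.smul_left_cancel.mp hscaled

theorem adjugate_mul_add_mul_adjugate_eq_zero {J A : Matrix ι ι R}
    (hcard : Even (Fintype.card ι)) (hJ : IsUnit J.det) (hA : A * J + J * A = 0) :
    adjugate A * J + J * adjugate A = 0 := by
  have hJA : J * A = -A * J := by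
    rw [neg_mul, eq_neg_iff_add_eq_zero, add_comm, hA]
  rw [mul_adjugate_eq_adjugate_mul_of_mul_eq_mul hJ hJA, adjugate_neg_of_even_card hcard,
    neg_mul, add_neg_cancel]

end Matrix

theorem stmt9_general (n : ℕ) (J A : Matrix (Fin (2 * n)) (Fin (2 * n)) ℝ)
    (hJ2 : J * J = -1) (hA : A * J + J * A = 0) :
    A.adjugate * J + J * A.adjugate = 0 := by
  have hJ : IsUnit J :=
    IsUnit.of_mul_eq_one (-J) (by rw [Matrix.mul_neg, hJ2, neg_neg])
  exact adjugate_mul_add_mul_adjugate_eq_zero (by simp)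
    ((isUnit_iff_isUnit_det J).mp hJ) hA

/-- If `J² = -1`, `det J = 1` and `A` anticommutes with `J`, then the adjugate of `A`
also anticommutes with `J`. -/
theorem stmt9 (n : ℕ) (J A : Matrix (Fin (2 * n)) (Fin (2 * n)) ℝ)
    (hJ2 : J * J = -1) (hdet : J.det = 1) (hA : A * J + J * A = 0) :
    A.adjugate * J + J * A.adjugate = 0 :=
  stmt9_general n J A hJ2 hA
end

section
/- Let G be a symmetric positive definite real n×n matrix and let A be a real n×n matrix such that G·A is symmetric. Then G·adj(A) is also symmetric, where adj(A) is the adjugate of A. -/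
open Matrix

namespace Matrix

variable {n R : Type*} [Fintype n] [DecidableEq n] [CommRing R]

/- Applying `adjugate` to `X * G = G * A` gives `adj G * adj X = adj A * adj G`; multiplying by
`G` on both sides turns each `adj G` into `det G`, which can then be cancelled. -/
theorem adjugate_mul_eq_mul_adjugate_of_mul_eq_mul {G X A : Matrix n n R} (hG : IsUnit G.det)
    (h : X * G = G * A) : X.adjugate * G = G * A.adjugate := by
  have hadj : G.adjugate * X.adjugate = A.adjugate * G.adjugate := by
    rw [← adjugate_mul_distrib, h, adjugate_mul_distrib]
  refine hG.smul_left_cancel.mp ?_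
  calc G.det • (X.adjugate * G) = G * (G.adjugate * X.adjugate) * G := by
        rw [← mul_assoc, mul_adjugate, smul_one_mul, smul_mul]
    _ = G * (A.adjugate * G.adjugate) * G := by rw [hadj]
    _ = G.det • (G * A.adjugate) := by
        rw [mul_assoc, mul_assoc, adjugate_mul, mul_smul_one, Matrix.mul_smul]

theorem IsSymm.mul_adjugate_of_mul {G A : Matrix n n R} (hG : G.IsSymm) (hdet : IsUnit G.det)
    (hGA : (G * A).IsSymm) : (G * A.adjugate).IsSymm := by
  have hAt : Aᵀ * G = G * A := by
    simpa only [IsSymm, transpose_mul, hG.eq] using hGA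
  rw [IsSymm, transpose_mul, hG.eq, adjugate_transpose]
  exact adjugate_mul_eq_mul_adjugate_of_mul_eq_mul hdet hAt

end Matrix

/-- If `G` is a symmetric positive definite real matrix and `G * A` is symmetric, then
`G * adjugate A` is also symmetric. -/
theorem stmt10 (n : ℕ) (G A : Matrix (Fin n) (Fin n) ℝ)
    (hG : G.PosDef) (hGA : (G * A).IsSymm) :
    (G * A.adjugate).IsSymm :=
  (isHermitian_iff_isSymm.mp hG.isHermitian).mul_adjugate_of_mul hG.det_pos.ne'.isUnit hGA
end

section
/- Let k₁, k₂, k₃, k₄ be real numbers and let M be the real 6×6 matrix M = −(1/2)·[[2k₁, 2k₂, 0, 0, −2k₄, 0], [k₂, k₁+k₃, k₂, k₄, 0, −k₄], [0, 2k₂, 2k₃, 0, 2k₄, 0], [0, 2k₄, 0, 2k₁, 2k₂, 0], [−k₄, 0, k₄, k₂, k₁+k₃, k₂], [0, −2k₄, 0, 0, 2k₂, 2k₃]]. Set δ± = (1/2)·((k₁+k₃) ± √((k₁−k₃)² + 4k₂² + 4k₄²)). Then the characteristic polynomial of M equals (X + (k₁+k₃)/2)² · (X + δ⁺)² · (X +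 δ⁻)²; in particular the eigenvalues of M are −(k₁+k₃)/2, −δ⁺ and −δ⁻, each with multiplicity 2. -/
/-!
Split along `(E₁, E₂, E₃ | E₄, E₅, E₆)`, `M` has the block form `[[P, Q], [-Q, P]]`: it is the
realification of the complex `3 × 3` matrix `P + iQ`, and conjugating by `[[1, 1], [i, -i]]` shows
that its characteristic polynomial is `χ(P + iQ) · χ(P - iQ)`. Both `P ± iQ` are the matrices of
`B ↦ LB + BLᵀ` on symmetric `2 × 2` matrices for `L = -(1/2) [[k₁, k₂ ∓ ik₄], [k₂ ± ik₄, k₃]]`,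
whose eigenvalues are `-δ±/2`. When `L` has eigenvalues `λ, μ`, this map has eigenvalues
`2λ, λ + μ, 2μ`, here `-δ⁺, -(k₁ + k₃)/2, -δ⁻`.
-/

open Matrix Polynomial

theorem charpoly_fromBlocks_neg {n R : Type*} [Fintype n] [DecidableEq n] [CommRing R]
    [Invertible (2 : R)] {i : R} (hi : i * i = -1) (P Q : Matrix n n R) :
    (fromBlocks P Q (-Q) P).charpoly = (P + i • Q).charpoly * (P - i • Q).charpoly := by
  set V : Matrix (n ⊕ n) (n ⊕ n) R := fromBlocks 1 1 (i • 1) (-i • 1)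
  set W : Matrix (n ⊕ n) (n ⊕ n) R := (⅟2 : R) • fromBlocks 1 (-i • 1) 1 (i • 1)
  have hVW : V * W = 1 := by
    rw [mul_smul_comm, fromBlocks_multiply, fromBlocks_smul, ← fromBlocks_one]
    congr 1 <;> simp [smul_smul, hi, ← two_smul R]
  have hWV : W * V = 1 := by
    rw [smul_mul_assoc, fromBlocks_multiply, fromBlocks_smul, ← fromBlocks_one]
    congr 1 <;> simp [smul_smul, hi, ← two_smul R]
  have hconj : fromBlocks P Q (-Q) P * V = V * fromBlocks (P + i • Q) 0 0 (P - i • Q) := by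
    simp only [V, fromBlocks_multiply]
    congr 1 <;> simp [smul_smul, hi, sub_eq_add_neg, add_comm]
  calc (fromBlocks P Q (-Q) P).charpoly = (V * (W * fromBlocks P Q (-Q) P)).charpoly := by
        rw [← mul_assoc, hVW, one_mul]
    _ = (W * fromBlocks P Q (-Q) P * V).charpoly := charpoly_mul_comm _ _
    _ = (fromBlocks (P + i • Q) 0 0 (P - i • Q)).charpoly := by
        rw [mul_assoc, hconj, ← mul_assoc, hWV, one_mul]
    _ = _ := charpoly_fromBlocks_zero₁₂ _ _ _

section SymSq

variable {R : Type*} [CommRing R]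

/-- The matrix of `B ↦ L * B + B * Lᵀ` on symmetric `2 × 2` matrices, in the basis
`E₁₁, E₁₂ + E₂₁, E₂₂`. -/
def symSq : Matrix (Fin 2) (Fin 2) R →ₗ[R] Matrix (Fin 3) (Fin 3) R where
  toFun L := !![2 * L 0 0, 2 * L 0 1, 0; L 1 0, L 0 0 + L 1 1, L 0 1; 0, 2 * L 1 0, 2 * L 1 1]
  map_add' L L' := by ext i j; fin_cases i <;> fin_cases j <;> simp [mul_add, add_add_add_comm]
  map_smul' c L := by ext i j; fin_cases i <;> fin_cases j <;> simp [mul_add, mul_left_comm]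

theorem charpoly_symSq (L : Matrix (Fin 2) (Fin 2) R) {x y : R} (hsum : 2 * L.trace = x + y)
    (hprod : 4 * L.det = x * y) :
    (symSq L).charpoly = (X - C x) * (X - C L.trace) * (X - C y) := by
  have h : (symSq L).charpoly =
      (X - C L.trace) * (X ^ 2 - C (2 * L.trace) * X + C (4 * L.det)) := by
    rw [charpoly, det_fin_three]
    simp only [symSq, LinearMap.coe_mk, AddHom.coe_mk, charmatrix_apply_eq, charmatrix_apply_ne,
      ne_eq, Fin.reduceEq, not_false_eq_true, zero_ne_one, one_ne_zero, of_apply, cons_val',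
      cons_val_zero, cons_val_one, cons_val, cons_val_fin_one, trace_fin_two, det_fin_two,
      map_mul, map_ofNat, map_add, map_sub, map_zero, mul_neg, neg_mul, neg_neg, neg_zero,
      mul_zero, zero_mul, add_zero, sub_zero]
    ring
  rw [h, hsum, hprod, C_add, C_mul]
  ring

end SymSq

noncomputable def curvatureMatrix (k₁ k₂ k₃ k₄ : ℝ) : Matrix (Fin 6) (Fin 6) ℝ :=
  (-(1 / 2 : ℝ)) •
    !![2*k₁, 2*k₂, 0, 0, -2*k₄, 0;
       k₂, k₁+k₃, k₂, k₄, 0, -k₄;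
       0, 2*k₂, 2*k₃, 0, 2*k₄, 0;
       0, 2*k₄, 0, 2*k₁, 2*k₂, 0;
       -k₄, 0, k₄, k₂, k₁+k₃, k₂;
       0, -2*k₄, 0, 0, 2*k₂, 2*k₃]

theorem curvatureMatrix_map_ofReal (k₁ k₂ k₃ k₄ : ℝ) :
    (curvatureMatrix k₁ k₂ k₃ k₄).map Complex.ofRealHom =
      reindex finSumFinEquiv finSumFinEquiv
        (fromBlocks (symSq ((-(1 / 2) : ℂ) • !![(k₁ : ℂ), k₂; k₂, k₃]))
          (symSq ((-(1 / 2) : ℂ) • !![0, -(k₄ : ℂ); k₄, 0]))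
          (-symSq ((-(1 / 2) : ℂ) • !![0, -(k₄ : ℂ); k₄, 0]))
          (symSq ((-(1 / 2) : ℂ) • !![(k₁ : ℂ), k₂; k₂, k₃]))) := by
  ext i j
  fin_cases i <;> fin_cases j <;>
    simp [curvatureMatrix, symSq, fromBlocks, finSumFinEquiv, Fin.addCases] <;> ring

theorem charpoly_symSq_curvatureBlock {k₁ k₂ k₃ k₄ δp δm : ℝ} (hsum : δp + δm = k₁ + k₃)
    (hprod : δp * δm = k₁ * k₃ - k₂ ^ 2 - k₄ ^ 2) {ε : ℂ} (hε : ε * ε = -1) :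
    (symSq ((-(1 / 2) : ℂ) • !![(k₁ : ℂ), k₂; k₂, k₃] +
        ε • (-(1 / 2) : ℂ) • !![0, -(k₄ : ℂ); k₄, 0])).charpoly =
      ((X + C δp) * (X + C ((k₁ + k₃) / 2)) * (X + C δm)).map Complex.ofRealHom := by
  have hsumC : (δp : ℂ) + δm = k₁ + k₃ := by exact_mod_cast hsum
  have hprodC : (δp : ℂ) * δm = k₁ * k₃ - k₂ ^ 2 - k₄ ^ 2 := by exact_mod_cast hprod
  set L : Matrix (Fin 2) (Fin 2) ℂ :=
    (-(1 / 2) : ℂ) • !![(k₁ : ℂ), k₂; k₂, k₃] + ε • (-(1 / 2) : ℂ) • !![0, -(k₄ : ℂ); k₄, 0]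
  have htrace : L.trace = ((-((k₁ + k₃) / 2) : ℝ) : ℂ) := by
    simp only [L, one_div, neg_smul, smul_of, smul_cons, smul_eq_mul, smul_empty, neg_of,
      neg_cons, neg_empty, mul_zero, mul_neg, neg_zero, neg_neg, of_add_of, add_cons, head_cons,
      add_zero, tail_cons, empty_add_empty, trace_fin_two, of_apply, cons_val', cons_val_zero,
      cons_val_fin_one, cons_val_one, Complex.ofReal_neg, Complex.ofReal_div,
      Complex.ofReal_add, Complex.ofReal_ofNat]
    ring
  have htrace_sum : 2 * L.trace = -(δp : ℂ) + -(δm : ℂ) := by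
    rw [htrace]
    push_cast
    linear_combination hsumC
  have hdet_prod : 4 * L.det = -(δp : ℂ) * -(δm : ℂ) := by
    simp only [L, one_div, neg_smul, smul_of, smul_cons, smul_eq_mul, smul_empty, neg_of,
      neg_cons, neg_empty, mul_zero, mul_neg, neg_zero, neg_neg, of_add_of, add_cons, head_cons,
      add_zero, tail_cons, empty_add_empty, det_fin_two, of_apply, cons_val', cons_val_zero,
      cons_val_fin_one, cons_val_one, neg_mul]
    linear_combination -hprodC + k₄ ^ 2 * hε
  rw [charpoly_symSq L htrace_sum hdet_prod, htrace]
  simp only [Polynomial.map_mul, Polynomial.map_add, Polynomial.map_X, Polynomial.map_C,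
    Complex.ofRealHom_eq_coe, Complex.ofReal_neg, C_neg, sub_neg_eq_add]

theorem charpoly_curvatureMatrix {k₁ k₂ k₃ k₄ δp δm : ℝ} (hsum : δp + δm = k₁ + k₃)
    (hprod : δp * δm = k₁ * k₃ - k₂ ^ 2 - k₄ ^ 2) :
    (curvatureMatrix k₁ k₂ k₃ k₄).charpoly =
      (X + C ((k₁ + k₃) / 2)) ^ 2 * (X + C δp) ^ 2 * (X + C δm) ^ 2 := by
  apply map_injective Complex.ofRealHom Complex.ofReal_injective
  rw [← charpoly_map, curvatureMatrix_map_ofReal, charpoly_reindex,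
    charpoly_fromBlocks_neg Complex.I_mul_I, ← map_smul symSq Complex.I, ← map_add symSq,
    ← map_sub symSq, sub_eq_add_neg, ← neg_smul,
    charpoly_symSq_curvatureBlock hsum hprod Complex.I_mul_I,
    charpoly_symSq_curvatureBlock hsum hprod (by rw [neg_mul_neg, Complex.I_mul_I]),
    ← Polynomial.map_mul]
  congr 1
  ring

/-- The characteristic polynomial of the curvature matrix `M` built from the invariants
`k₁, k₂, k₃, k₄` factors as `(X + (k₁+k₃)/2)² (X + δ⁺)² (X + δ⁻)²`, where
`δ± = (1/2)((k₁+k₃) ± √((k₁-k₃)² + 4k₂² + 4k₄²))`; in particular the eigenvalues of `M`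
are `-(k₁+k₃)/2`, `-δ⁺` and `-δ⁻`, each with multiplicity `2`. -/
theorem stmt13 (k₁ k₂ k₃ k₄ : ℝ) (M : Matrix (Fin 6) (Fin 6) ℝ)
    (hM : M = (-(1 / 2 : ℝ)) •
      !![2*k₁, 2*k₂, 0, 0, -2*k₄, 0;
         k₂, k₁+k₃, k₂, k₄, 0, -k₄;
         0, 2*k₂, 2*k₃, 0, 2*k₄, 0;
         0, 2*k₄, 0, 2*k₁, 2*k₂, 0;
         -k₄, 0, k₄, k₂, k₁+k₃, k₂;
         0, -2*k₄, 0, 0, 2*k₂, 2*k₃])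
    (δp δm : ℝ)
    (hδp : δp = (1 / 2) * ((k₁ + k₃) + Real.sqrt ((k₁ - k₃) ^ 2 + 4 * k₂ ^ 2 + 4 * k₄ ^ 2)))
    (hδm : δm = (1 / 2) * ((k₁ + k₃) - Real.sqrt ((k₁ - k₃) ^ 2 + 4 * k₂ ^ 2 + 4 * k₄ ^ 2))) :
    M.charpoly = (X + C ((k₁ + k₃) / 2)) ^ 2 * (X + C δp) ^ 2 * (X + C δm) ^ 2 := by
  have hsqrt : Real.sqrt ((k₁ - k₃) ^ 2 + 4 * k₂ ^ 2 + 4 * k₄ ^ 2) ^ 2 =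
      (k₁ - k₃) ^ 2 + 4 * k₂ ^ 2 + 4 * k₄ ^ 2 := Real.sq_sqrt (by positivity)
  subst hM hδp hδm
  exact charpoly_curvatureMatrix (by ring) (by linear_combination (-1 / 4) * hsqrt)
end
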